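/- Let S be a finite set of points in the plane in general position with |S| ≥ 2, and let s, t be two distinct points of S. Then there exists a plane (crossing-free) straight-line spanning path of S that starts at s and ends at t. -/

import Mathlib

/-- Points in the plane. -/
abbrev Pt := ℝ × ℝ

/-- No three distinct points of `S` are collinear. -/
def GenPos (S : Set Pt) : Prop :=
  ∀ a ∈ S, ∀ b ∈ S, ∀ c ∈ S, a ≠ b → a ≠ c → b ≠ c →
    ¬ Collinear ℝ ({a, b, c} : Set Pt)

/-- A point `p` outside the hull sees `q ∈ S` if the segment `pq` meets
the convex hull of `S` exactly in `{q}`. -/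
def Sees (p q : Pt) (S : Set Pt) : Prop :=
  segment ℝ p q ∩ convexHull ℝ S = {q}

/-- The set of points of `S` seen from `p`. -/
def SeenSet (p : Pt) (S : Set Pt) : Set Pt := {q ∈ S | Sees p q S}

/-- `x` is an extreme point of `S`. -/
def ExtremePt (S : Set Pt) (x : Pt) : Prop := x ∈ S ∧ x ∉ convexHull ℝ (S \ {x})

/-- `ab` is an edge of the boundary of the convex hull of `S`. -/
def HullEdge (S : Set Pt) (a b : Pt) : Prop :=
  a ∈ S ∧ b ∈ S ∧ a ≠ b ∧ segment ℝ a b ⊆ frontier (convexHull ℝ S)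

/-- A list enumerating the extreme points of `S` in cyclic convex-position
order along the boundary of the convex hull. -/
def HullCycle (S : Set Pt) (l : List Pt) : Prop :=
  l.Nodup ∧ {x | x ∈ l} = {x | ExtremePt S x} ∧
    ∀ i < l.length, HullEdge S l[i]! l[(i + 1) % l.length]!

/-- A contiguous arc along the boundary of the hull of `S`
beginning in `a` and ending in `c`. -/
def Arc (S : Set Pt) (a c : Pt) (A : List Pt) : Prop :=
  ∃ l, HullCycle S l ∧ ∃ k ≤ l.length,
    A = l.take k ∧ A.head? = some a ∧ A.getLast? = some c

/-- The (undirected) edges of the path given by the list `l`. -/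
def edgeSet (l : List Pt) : Set (Set Pt) :=
  {e | ∃ p ∈ l.zip l.tail, e = ({p.1, p.2} : Set Pt)}

/-- The straight-line drawing of the path `l` is crossing-free: two edges meet
only in common endpoints. -/
def PlaneList (l : List Pt) : Prop :=
  ∀ i j : ℕ, i < j → j + 1 < l.length →
    segment ℝ l[i]! l[i + 1]! ∩ segment ℝ l[j]! l[j + 1]! ⊆
      ({l[i]!, l[i + 1]!} ∩ {l[j]!, l[j + 1]!} : Set Pt)

/-- `l` visits every point of `S` exactly once. -/
def IsSpanningPath (S : Set Pt) (l : List Pt) : Prop :=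
  l.Nodup ∧ {x | x ∈ l} = S

/-- A crossing-free straight-line spanning path of `S`. -/
def PlaneSpanningPath (S : Set Pt) (l : List Pt) : Prop :=
  IsSpanningPath S l ∧ PlaneList l

/-- Two paths are edge-disjoint if no segment is an edge of both. -/
def EdgeDisjoint (P Q : List Pt) : Prop := ∀ e ∈ edgeSet P, e ∉ edgeSet Q

/-- `S` admits three pairwise edge-disjoint plane spanning paths. -/
def ThreePaths (S : Set Pt) : Prop :=
  ∃ P Q R : List Pt,
    PlaneSpanningPath S P ∧ PlaneSpanningPath S Q ∧ PlaneSpanningPath S R ∧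
    EdgeDisjoint P Q ∧ EdgeDisjoint P R ∧ EdgeDisjoint Q R

/-- `(S₁, S₂)` is a balanced separated partition of `S`. -/
def BSP (S S₁ S₂ : Finset Pt) : Prop :=
  S₁ ∪ S₂ = S ∧ Disjoint S₁ S₂ ∧
  (S₁.card : ℤ) - S₂.card ≤ 1 ∧ (S₂.card : ℤ) - S₁.card ≤ 1 ∧
  Disjoint (convexHull ℝ (S₁ : Set Pt)) (convexHull ℝ (S₂ : Set Pt))

/-- `ab` is an edge of the visibility graph `V(S₁,S₂)`. -/
def VisEdge (S₁ S₂ : Finset Pt) (a b : Pt) : Prop :=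
  a ∈ S₁ ∧ b ∈ S₂ ∧
  segment ℝ a b ∩ (convexHull ℝ (S₁ : Set Pt) ∪ convexHull ℝ (S₂ : Set Pt))
    = ({a, b} : Set Pt)

/-- Two segments cross: their open segments share a point. -/
def SegCross (a b c d : Pt) : Prop :=
  (openSegment ℝ a b ∩ openSegment ℝ c d).Nonempty

/-- Consecutive vertices of `l` alternate between `S₁` and `S₂`. -/
def Alternating (S₁ S₂ : Finset Pt) (l : List Pt) : Prop :=
  ∀ i, i + 1 < l.length →
    (l[i]! ∈ S₁ ∧ l[i + 1]! ∈ S₂) ∨ (l[i]! ∈ S₂ ∧ l[i + 1]! ∈ S₁)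

/-- A zig-zag path for the balanced separated partition `(S₁,S₂)` of `S`. -/
def ZigZag (S S₁ S₂ : Finset Pt) (l : List Pt) : Prop :=
  PlaneSpanningPath (S : Set Pt) l ∧ Alternating S₁ S₂ l

/-- Twice the signed area of the triangle `a b c`; positive iff `c` lies to the
left of the directed line `ab`. -/
def ccw (a b c : Pt) : ℝ :=
  (b.1 - a.1) * (c.2 - a.2) - (b.2 - a.2) * (c.1 - a.1)

/-- `uv` is a halving segment of `S`: the line through `u` and `v` has exactly
`(|S| - 2)/2` points of `S` strictly on each side. -/
def Halving (S : Finset Pt) (u v : Pt) : Prop :=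
  u ∈ S ∧ v ∈ S ∧ u ≠ v ∧
  2 * ((S : Set Pt) ∩ {s | 0 < ccw u v s}).ncard = S.card - 2 ∧
  2 * ((S : Set Pt) ∩ {s | ccw u v s < 0}).ncard = S.card - 2

/-- The wheel configuration: all points but one in convex position, and one
interior point `y` such that every line through `y` and another point of the
configuration halves the remaining points. -/
def IsWheel (S : Finset Pt) : Prop :=
  ∃ y ∈ S,
    (∀ x ∈ S.erase y, x ∉ convexHull ℝ (((S.erase y : Finset Pt) : Set Pt) \ {x})) ∧
    y ∈ interior (convexHull ℝ ((S.erase y : Finset Pt) : Set Pt)) ∧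
    ∀ x ∈ S.erase y, Halving S y x

/-- `v` is a switchable path for the balanced separated partition `(S₁,S₂)` of
`S`: its edges are visibility edges, they cross a separating line of the
partition in order along the line, and every open triangle spanned by three
consecutive vertices contains no point of `S`. -/
def Switchable (S S₁ S₂ : Finset Pt) (v : List Pt) : Prop :=
  2 ≤ v.length ∧
  (∀ i, i + 1 < v.length →
    VisEdge S₁ S₂ v[i]! v[i + 1]! ∨ VisEdge S₁ S₂ v[i + 1]! v[i]!) ∧
  (∃ (f : Pt →ₗ[ℝ] ℝ) (c : ℝ),
    (∀ x ∈ S₁, f x < c) ∧ (∀ x ∈ S₂, c < f x) ∧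
    ∃ x : ℕ → Pt,
      (∀ i, i + 1 < v.length → x i ∈ segment ℝ v[i]! v[i + 1]! ∧ f (x i) = c) ∧
      ∃ g : Pt →ₗ[ℝ] ℝ, ∀ i j, i < j → j + 1 < v.length → g (x i) < g (x j)) ∧
  ∀ i, i + 2 < v.length →
    ∀ s ∈ S, s ∉ interior (convexHull ℝ ({v[i]!, v[i + 1]!, v[i + 2]!} : Set Pt))

/-- `u` is a bridged vertex of the partition `(S₁,S₂)` of `S`: an endpoint of an
edge of the boundary of `conv S` with one endpoint in each class. -/
def Bridged (S S₁ S₂ : Finset Pt) (u : Pt) : Prop :=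
  ∃ w, HullEdge (S : Set Pt) u w ∧
    ((u ∈ S₁ ∧ w ∈ S₂) ∨ (u ∈ S₂ ∧ w ∈ S₁))

/-- `u` is incident with at least two edges of the visibility graph. -/
def IncidentVisEdges2 (S₁ S₂ : Finset Pt) (u : Pt) : Prop :=
  ∃ w₁ w₂, w₁ ≠ w₂ ∧
    (VisEdge S₁ S₂ u w₁ ∨ VisEdge S₁ S₂ w₁ u) ∧
    (VisEdge S₁ S₂ u w₂ ∨ VisEdge S₁ S₂ w₂ u)

/-!
If `s` is a strictly exposed vertex of the hull of `S`, peel it off: one of its two hull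
neighbours, `r`, differs from `t`; every other point lies strictly on one side of the line `sr`,
so the edge `sr` crosses no segment between points of `S \ {s}`, and `r` is again exposed in
`S \ {s}`, so induction supplies the rest of the path from `r` to `t`.

If neither `s` nor `t` is exposed, cut `S` by a line separating `s` from `t` and join the two
halves by their common tangent `ab`. Its endpoints are exposed in their halves, and `a ≠ s`,
`b ≠ t` since otherwise `s` or `t` would be exposed in `S`. Concatenating a path `s ⇝ a`, the
edge `ab` and a path `b ⇝ t` gives the result: the halves lie in disjoint half-planes and all of
`S` lies on one side of `ab`.
-/

open Filter Topology

def dot (u v : Pt) : ℝ := u.1 * v.1 + u.2 * v.2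

def perp (u : Pt) : Pt := (-u.2, u.1)

lemma dot_sub_right (w u v : Pt) : dot w (u - v) = dot w u - dot w v := by
  simp only [dot, Prod.fst_sub, Prod.snd_sub]; ring

lemma dot_neg_left (u v : Pt) : dot (-u) v = -dot u v := by
  simp only [dot, Prod.fst_neg, Prod.snd_neg]; ring

lemma dot_self_pos {d : Pt} (hd : d ≠ 0) : 0 < dot d d := by
  have : d.1 ≠ 0 ∨ d.2 ≠ 0 := by
    by_contra! h
    exact hd (Prod.ext h.1 h.2)
  unfold dot
  rcases this with h | h
  · nlinarith [mul_self_pos.mpr h, mul_self_nonneg d.2]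
  · nlinarith [mul_self_pos.mpr h, mul_self_nonneg d.1]

lemma isLinearMap_dot (w : Pt) : IsLinearMap ℝ (dot w) where
  map_add u v := by simp only [dot, Prod.fst_add, Prod.snd_add]; ring
  map_smul c u := by simp only [dot, Prod.smul_fst, Prod.smul_snd, smul_eq_mul]; ring

lemma dot_mul_ccw (d a b x : Pt) :
    dot d d * ccw a b x =
      dot d (b - a) * dot (perp d) (x - a) - dot (perp d) (b - a) * dot d (x - a) := by
  simp only [dot, perp, ccw, Prod.fst_sub, Prod.snd_sub]; ring

lemma ccw_swap (a b c : Pt) : ccw b a c = -ccw a b c := by unfold ccw; ring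

lemma ccw_self_left (a b : Pt) : ccw a b a = 0 := by unfold ccw; ring

lemma ccw_self_right (a b : Pt) : ccw a b b = 0 := by unfold ccw; ring

lemma ccw_add_smul {a b p q : Pt} {u v : ℝ} (huv : u + v = 1) :
    ccw a b (u • p + v • q) = u * ccw a b p + v * ccw a b q := by
  simp only [ccw, Prod.fst_add, Prod.snd_add, Prod.smul_fst, Prod.smul_snd, smul_eq_mul]
  linear_combination (a.2 * (b.1 - a.1) - a.1 * (b.2 - a.2)) * huv

lemma ccw_eq_zero_of_mem_segment {a b z : Pt} (hz : z ∈ segment ℝ a b) : ccw a b z = 0 := by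
  obtain ⟨u, v, -, -, huv, rfl⟩ := hz
  rw [ccw_add_smul huv, ccw_self_left, ccw_self_right]; ring

lemma collinear_of_ccw_eq_zero {a b c : Pt} (h : ccw a b c = 0) :
    Collinear ℝ ({a, b, c} : Set Pt) := by
  rcases eq_or_ne a b with rfl | hab
  · simpa using collinear_pair ℝ a c
  have hN : dot (b - a) (b - a) ≠ 0 := (dot_self_pos (sub_ne_zero.mpr hab.symm)).ne'
  rw [Set.pair_comm b c, Set.insert_comm a c]
  refine collinear_insert_of_mem_affineSpan_pair ?_
  have hc : AffineMap.lineMap a b (dot (b - a) (c - a) / dot (b - a) (b - a)) = c := by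
    rw [AffineMap.lineMap_apply_module']
    set r := dot (b - a) (c - a) / dot (b - a) (b - a)
    have hr : r * dot (b - a) (b - a) = dot (b - a) (c - a) := div_mul_cancel₀ _ hN
    simp only [dot, ccw, Prod.fst_sub, Prod.snd_sub] at h hr hN
    ext <;> simp only [Prod.fst_add, Prod.snd_add, Prod.smul_fst, Prod.smul_snd, Prod.fst_sub,
      Prod.snd_sub, smul_eq_mul] <;> apply mul_left_cancel₀ hN
    · linear_combination (b.1 - a.1) * hr + (b.2 - a.2) * h
    · linear_combination (b.2 - a.2) * hr - (b.1 - a.1) * h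
  exact hc ▸ AffineMap.lineMap_mem_affineSpan_pair _ a b

lemma GenPos.mono {S T : Set Pt} (h : T ⊆ S) (hgp : GenPos S) : GenPos T :=
  fun a ha b hb c hc => hgp a (h ha) b (h hb) c (h hc)

lemma GenPos.ccw_ne_zero {S : Set Pt} (hgp : GenPos S) {a b c : Pt} (ha : a ∈ S) (hb : b ∈ S)
    (hc : c ∈ S) (hab : a ≠ b) (hac : a ≠ c) (hbc : b ≠ c) : ccw a b c ≠ 0 :=
  fun h => hgp a ha b hb c hc hab hac hbc (collinear_of_ccw_eq_zero h)

def Noncrossing (e f : Pt × Pt) : Prop :=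
  segment ℝ e.1 e.2 ∩ segment ℝ f.1 f.2 ⊆ ({e.1, e.2} ∩ {f.1, f.2} : Set Pt)

lemma Noncrossing.symm {e f : Pt × Pt} (h : Noncrossing e f) : Noncrossing f e := by
  rw [Noncrossing, Set.inter_comm, Set.inter_comm {f.1, f.2}]
  exact h

lemma Noncrossing.swap_left {e f : Pt × Pt} (h : Noncrossing e f) : Noncrossing e.swap f := by
  simpa only [Noncrossing, Prod.fst_swap, Prod.snd_swap, segment_symm, Set.pair_comm] using h

lemma noncrossing_of_disjoint {e f : Pt × Pt}
    (h : Disjoint (segment ℝ e.1 e.2) (segment ℝ f.1 f.2)) : Noncrossing e f := by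
  simp only [Noncrossing, h.inter_eq, Set.empty_subset]

lemma eq_endpoint_of_mem_segment_inter {a b p q z : Pt} (hza : z ∈ segment ℝ a b)
    (hzp : z ∈ segment ℝ p q) (hp : ccw a b p ≤ 0) (hq : ccw a b q ≤ 0)
    (hpq : ccw a b p < 0 ∨ ccw a b q < 0) :
    (z = p ∧ ccw a b p = 0) ∨ (z = q ∧ ccw a b q = 0) := by
  obtain ⟨u, v, hu, hv, huv, rfl⟩ := hzp
  have hz := ccw_eq_zero_of_mem_segment hza
  rw [ccw_add_smul huv] at hz
  have hup : u * ccw a b p = 0 := by nlinarith [mul_nonpos_of_nonneg_of_nonpos hv hq]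
  have hvq : v * ccw a b q = 0 := by nlinarith [mul_nonpos_of_nonneg_of_nonpos hu hp]
  rcases hpq with hp' | hq'
  · obtain rfl : u = 0 := (mul_eq_zero.mp hup).resolve_right hp'.ne
    obtain rfl : v = 1 := by linarith
    exact Or.inr ⟨by simp, by simpa using hvq⟩
  · obtain rfl : v = 0 := (mul_eq_zero.mp hvq).resolve_right hq'.ne
    obtain rfl : u = 1 := by linarith
    exact Or.inl ⟨by simp, by simpa using hup⟩

def IsSupportingEdge (S : Finset Pt) (a b : Pt) : Prop :=
  ∀ x ∈ S, x ≠ a → x ≠ b → ccw a b x < 0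

lemma IsSupportingEdge.ccw_nonpos {S : Finset Pt} {a b x : Pt} (h : IsSupportingEdge S a b)
    (hx : x ∈ S) : ccw a b x ≤ 0 := by
  rcases eq_or_ne x a with rfl | hxa
  · exact (ccw_self_left x b).le
  rcases eq_or_ne x b with rfl | hxb
  · exact (ccw_self_right a x).le
  exact (h x hx hxa hxb).le

lemma IsSupportingEdge.noncrossing {S : Finset Pt} {a b p q : Pt} (h : IsSupportingEdge S a b)
    (hp : p ∈ S) (hq : q ∈ S) (hpq : p ≠ q) (hab : (p ≠ a ∧ q ≠ a) ∨ (p ≠ b ∧ q ≠ b)) :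
    Noncrossing (a, b) (p, q) := by
  have off_line : (p ≠ a ∧ p ≠ b) ∨ (q ≠ a ∧ q ≠ b) := by grind
  have on_line : ∀ x ∈ S, ccw a b x = 0 → x = a ∨ x = b := fun x hx h0 => by
    by_contra! hne
    exact (h x hx hne.1 hne.2).ne h0
  rintro z ⟨hza, hzp⟩
  rcases eq_endpoint_of_mem_segment_inter hza hzp (h.ccw_nonpos hp) (h.ccw_nonpos hq)
    (off_line.imp (fun hp' => h p hp hp'.1 hp'.2) (fun hq' => h q hq hq'.1 hq'.2))
    with ⟨rfl, h0⟩ | ⟨rfl, h0⟩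
  · simpa using on_line z hp h0
  · simpa using on_line z hq h0

lemma isSupportingEdge_of_ccw_nonpos {S : Finset Pt} (hgp : GenPos (S : Set Pt)) {a b : Pt}
    (ha : a ∈ S) (hb : b ∈ S) (hab : a ≠ b) (h : ∀ x ∈ S, ccw a b x ≤ 0) :
    IsSupportingEdge S a b := fun x hx hxa hxb =>
  (h x hx).lt_of_ne (hgp.ccw_ne_zero ha hb hx hab (Ne.symm hxa) (Ne.symm hxb))

def edges (l : List Pt) : List (Pt × Pt) := l.zip l.tail

lemma edges_cons_cons (x y : Pt) (l : List Pt) : edges (x :: y :: l) = (x, y) :: edges (y :: l) :=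
  rfl

lemma edges_append_cons (l m : List Pt) (a b : Pt) :
    edges (l ++ [a] ++ b :: m) = edges (l ++ [a]) ++ (a, b) :: edges (b :: m) := by
  induction l with
  | nil => rfl
  | cons x l ih =>
    cases l with
    | nil => rfl
    | cons y l => simpa [edges_cons_cons] using ih

lemma mem_of_mem_edges {l : List Pt} {e : Pt × Pt} (he : e ∈ edges l) : e.1 ∈ l ∧ e.2 ∈ l :=
  ⟨(List.of_mem_zip he).1, List.mem_of_mem_tail (List.of_mem_zip he).2⟩

lemma fst_ne_snd_of_mem_edges {l : List Pt} (hl : l.Nodup) {e : Pt × Pt} (he : e ∈ edges l) :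
    e.1 ≠ e.2 := by
  induction l with
  | nil => simp [edges] at he
  | cons x l ih =>
    cases l with
    | nil => simp [edges] at he
    | cons y l =>
      rw [edges_cons_cons, List.mem_cons] at he
      rcases he with rfl | he
      · exact fun h : x = y => (List.nodup_cons.mp hl).1 (h ▸ List.mem_cons_self)
      · exact ih hl.of_cons he

lemma edges_reverse (l : List Pt) : edges l.reverse = ((edges l).map Prod.swap).reverse := by
  apply List.ext_getElem
  · simp [edges]
  · intro i h₁ h₂
    have hi : i < l.length - 1 := by simpa [edges] using h₁
    simp only [edges, List.getElem_reverse, List.getElem_map, List.getElem_zip,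
      List.getElem_tail, Prod.swap_prod_mk, List.length_map, List.length_zip, List.length_tail]
    congr 2 <;> omega

lemma planeList_iff_pairwise (l : List Pt) : PlaneList l ↔ (edges l).Pairwise Noncrossing := by
  rw [List.pairwise_iff_getElem]
  simp only [edges, List.length_zip, List.length_tail, List.getElem_zip, List.getElem_tail]
  have h! : ∀ i j (_ : i < j) (_ : j + 1 < l.length),
      (segment ℝ l[i]! l[i + 1]! ∩ segment ℝ l[j]! l[j + 1]! ⊆
        ({l[i]!, l[i + 1]!} ∩ {l[j]!, l[j + 1]!} : Set Pt)) =
      Noncrossing (l[i], l[i + 1]) (l[j], l[j + 1]) := fun i j hij hj => by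
    rw [getElem!_pos l i (by omega), getElem!_pos l (i + 1) (by omega),
      getElem!_pos l j (by omega), getElem!_pos l (j + 1) hj]
    rfl
  refine ⟨fun h i j hi hj hij => ?_, fun h i j hij hj => ?_⟩
  · exact h! i j hij (by omega) ▸ h i j hij (by omega)
  · exact h! i j hij hj ▸ h i j (by omega) (by omega) hij

lemma PlaneList.reverse {l : List Pt} (h : PlaneList l) : PlaneList l.reverse := by
  rw [planeList_iff_pairwise, edges_reverse, List.pairwise_reverse, List.pairwise_map]
  exact (planeList_iff_pairwise l).mp h |>.imp fun hef => hef.swap_left.symm.swap_left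

def PlanePathBetween (S : Finset Pt) (s t : Pt) : Prop :=
  ∃ l : List Pt, PlaneSpanningPath (S : Set Pt) l ∧ l.head? = some s ∧ l.getLast? = some t

lemma PlanePathBetween.symm {S : Finset Pt} {s t : Pt} (h : PlanePathBetween S s t) :
    PlanePathBetween S t s := by
  obtain ⟨l, ⟨⟨hnd, hmem⟩, hpl⟩, hs, ht⟩ := h
  exact ⟨l.reverse, ⟨⟨List.nodup_reverse.mpr hnd, by simpa using hmem⟩, hpl.reverse⟩,
    by simpa using ht, by simpa using hs⟩

lemma planePathBetween_pair {s t : Pt} (hst : s ≠ t) : PlanePathBetween {s, t} s t :=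
  ⟨[s, t], ⟨⟨by simpa using hst, by ext; simp⟩, fun i j hij hj => by simp at hj; omega⟩, rfl, rfl⟩

lemma PlanePathBetween.cons {S : Finset Pt} {s r t : Pt} (hs : s ∈ S)
    (h : PlanePathBetween (S.erase s) r t)
    (hsr : IsSupportingEdge S s r ∨ IsSupportingEdge S r s) : PlanePathBetween S s t := by
  obtain ⟨_ | ⟨r', l⟩, ⟨⟨hnd, hmem⟩, hpl⟩, hr, ht⟩ := h
  · simp at hr
  obtain rfl : r' = r := by simpa using hr
  have hmem' (x : Pt) : x ∈ r' :: l ↔ x ∈ S.erase s := Set.ext_iff.mp hmem x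
  refine ⟨s :: r' :: l, ⟨⟨List.nodup_cons.mpr ⟨fun h => by simpa using (hmem' s).mp h, hnd⟩, ?_⟩,
    ?_⟩, rfl, by rwa [List.getLast?_cons_cons]⟩
  · ext x
    by_cases hx : x = s <;> simp [hx, hs, hmem']
  · rw [planeList_iff_pairwise] at hpl ⊢
    rw [edges_cons_cons, List.pairwise_cons]
    refine ⟨fun f hf => ?_, hpl⟩
    have hf₁ := (hmem' _).mp (mem_of_mem_edges hf).1
    have hf₂ := (hmem' _).mp (mem_of_mem_edges hf).2
    have hf := fst_ne_snd_of_mem_edges hnd hf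
    rw [Finset.mem_erase] at hf₁ hf₂
    rcases hsr with hsr | hrs
    · exact hsr.noncrossing hf₁.2 hf₂.2 hf (.inl ⟨hf₁.1, hf₂.1⟩)
    · exact (hrs.noncrossing hf₁.2 hf₂.2 hf (.inr ⟨hf₁.1, hf₂.1⟩)).swap_left

lemma PlanePathBetween.append {S₁ S₂ : Finset Pt} {s a b t : Pt}
    (hsep : Disjoint (convexHull ℝ (S₁ : Set Pt)) (convexHull ℝ (S₂ : Set Pt)))
    (h₁ : PlanePathBetween S₁ s a) (h₂ : PlanePathBetween S₂ b t)
    (hab : IsSupportingEdge (S₁ ∪ S₂) a b) : PlanePathBetween (S₁ ∪ S₂) s t := by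
  obtain ⟨l₁, ⟨⟨hnd₁, hmem₁⟩, hpl₁⟩, hs, ha⟩ := h₁
  obtain ⟨_ | ⟨b', m⟩, ⟨⟨hnd₂, hmem₂⟩, hpl₂⟩, hb, ht⟩ := h₂
  · simp at hb
  obtain rfl : b' = b := by simpa using hb
  obtain ⟨l, rfl⟩ := List.getLast?_eq_some_iff.mp ha
  have hmem₁' (x : Pt) : x ∈ l ++ [a] ↔ x ∈ S₁ := Set.ext_iff.mp hmem₁ x
  have hmem₂' (x : Pt) : x ∈ b' :: m ↔ x ∈ S₂ := Set.ext_iff.mp hmem₂ x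
  have hne {x y : Pt} (hx : x ∈ S₁) (hy : y ∈ S₂) : x ≠ y := fun hxy =>
    hsep.ne_of_mem (subset_convexHull ℝ _ hx) (subset_convexHull ℝ _ hy) hxy
  have ha₁ : a ∈ S₁ := (hmem₁' a).mp (by simp)
  have hb₂ : b' ∈ S₂ := (hmem₂' b').mp (by simp)
  refine ⟨l ++ [a] ++ b' :: m, ⟨⟨?_, ?_⟩, ?_⟩, by simpa using hs, by simpa using ht⟩
  · exact List.nodup_append.mpr ⟨hnd₁, hnd₂, fun x hx y hy =>
      hne ((hmem₁' x).mp hx) ((hmem₂' y).mp hy)⟩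
  · ext x
    rw [Finset.coe_union, Set.mem_union, Finset.mem_coe, Finset.mem_coe, ← hmem₁', ← hmem₂']
    exact List.mem_append
  · rw [planeList_iff_pairwise] at hpl₁ hpl₂ ⊢
    rw [edges_append_cons, List.pairwise_append, List.pairwise_cons]
    refine ⟨hpl₁, ⟨fun f hf => ?_, hpl₂⟩, fun e he f hf => ?_⟩
    · have hf₁ := (hmem₂' _).mp (mem_of_mem_edges hf).1
      have hf₂ := (hmem₂' _).mp (mem_of_mem_edges hf).2
      exact hab.noncrossing (Finset.mem_union_right _ hf₁) (Finset.mem_union_right _ hf₂)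
        (fst_ne_snd_of_mem_edges hnd₂ hf) (.inl ⟨(hne ha₁ hf₁).symm, (hne ha₁ hf₂).symm⟩)
    have he₁ := (hmem₁' _).mp (mem_of_mem_edges he).1
    have he₂ := (hmem₁' _).mp (mem_of_mem_edges he).2
    rcases List.mem_cons.mp hf with rfl | hf
    · exact (hab.noncrossing (Finset.mem_union_left _ he₁) (Finset.mem_union_left _ he₂)
        (fst_ne_snd_of_mem_edges hnd₁ he) (.inr ⟨hne he₁ hb₂, hne he₂ hb₂⟩)).symm
    · have hf₁ := (hmem₂' _).mp (mem_of_mem_edges hf).1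
      have hf₂ := (hmem₂' _).mp (mem_of_mem_edges hf).2
      exact noncrossing_of_disjoint (hsep.mono (segment_subset_convexHull he₁ he₂)
        (segment_subset_convexHull hf₁ hf₂))

/-- The line through `p` and `q` meets the line `{z | dot d z = c}` at the point whose
`perp d`-coordinate is `crossingHeight d c p q`. -/
noncomputable def crossingHeight (d : Pt) (c : ℝ) (p q : Pt) : ℝ :=
  (dot (perp d) p * (dot d q - c) + dot (perp d) q * (c - dot d p)) / (dot d q - dot d p)

/- Cross-multiplied, the differences of heights in the next two lemmas are `dot d d * ccw a b x`
times `dot d b - c` and `c - dot d a` respectively. -/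
lemma ccw_nonpos_of_crossingHeight_le_left {d a b x : Pt} {c : ℝ} (hd : d ≠ 0)
    (ha : dot d a < c) (hb : c < dot d b) (hx : dot d x < c)
    (h : crossingHeight d c x b ≤ crossingHeight d c a b) : ccw a b x ≤ 0 := by
  have key := dot_mul_ccw d a b x
  rw [dot_sub_right, dot_sub_right, dot_sub_right, dot_sub_right] at key
  rw [crossingHeight, crossingHeight, div_le_div_iff₀ (by linarith) (by linarith)] at h
  have hD : dot d d * ccw a b x ≤ 0 := by rw [key]; nlinarith
  exact nonpos_of_mul_nonpos_right hD (dot_self_pos hd)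

lemma ccw_nonpos_of_crossingHeight_le_right {d a b x : Pt} {c : ℝ} (hd : d ≠ 0)
    (ha : dot d a < c) (hb : c < dot d b) (hx : c < dot d x)
    (h : crossingHeight d c a x ≤ crossingHeight d c a b) : ccw a b x ≤ 0 := by
  have key := dot_mul_ccw d a b x
  rw [dot_sub_right, dot_sub_right, dot_sub_right, dot_sub_right] at key
  rw [crossingHeight, crossingHeight, div_le_div_iff₀ (by linarith) (by linarith)] at h
  have hD : dot d d * ccw a b x ≤ 0 := by rw [key]; nlinarith
  exact nonpos_of_mul_nonpos_right hD (dot_self_pos hd)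

/-- The pair whose connecting line crosses the separating line highest is a common tangent. -/
lemma exists_ccw_nonpos_of_separated {S₁ S₂ : Finset Pt} (h₁ : S₁.Nonempty) (h₂ : S₂.Nonempty)
    {d : Pt} {c : ℝ} (hS₁ : ∀ x ∈ S₁, dot d x < c) (hS₂ : ∀ y ∈ S₂, c < dot d y) :
    ∃ a ∈ S₁, ∃ b ∈ S₂, ∀ x ∈ S₁ ∪ S₂, ccw a b x ≤ 0 := by
  obtain ⟨⟨a, b⟩, hab, hmax⟩ :=
    (S₁ ×ˢ S₂).exists_max_image (fun pq => crossingHeight d c pq.1 pq.2) (h₁.product h₂)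
  obtain ⟨ha, hb⟩ := Finset.mem_product.mp hab
  have hd : d ≠ 0 := by
    rintro rfl
    have := (hS₁ a ha).trans (hS₂ b hb)
    simp [dot] at this
  refine ⟨a, ha, b, hb, fun x hx => ?_⟩
  rcases Finset.mem_union.mp hx with hx | hx
  · exact ccw_nonpos_of_crossingHeight_le_left hd (hS₁ a ha) (hS₂ b hb) (hS₁ x hx)
      (hmax (x, b) (Finset.mk_mem_product hx hb))
  · exact ccw_nonpos_of_crossingHeight_le_right hd (hS₁ a ha) (hS₂ b hb) (hS₂ x hx)
      (hmax (a, x) (Finset.mk_mem_product ha hx))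

def StrictlyExposed (S : Finset Pt) (s : Pt) : Prop :=
  ∃ w : Pt, ∀ y ∈ S, y ≠ s → 0 < dot w (y - s)

lemma StrictlyExposed.mono {S T : Finset Pt} {s : Pt} (h : StrictlyExposed S s) (hTS : T ⊆ S) :
    StrictlyExposed T s :=
  let ⟨w, hw⟩ := h
  ⟨w, fun y hy => hw y (hTS hy)⟩

/-- A direction `w₀` exposing `s` except for `b`, which it sees at level `0`, exposes `s` once
tilted slightly towards `b`. -/
lemma strictlyExposed_of_dot_pos {S : Finset Pt} {s b w₀ : Pt} (hbs : b ≠ s)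
    (hb : dot w₀ (b - s) = 0) (hw₀ : ∀ y ∈ S, y ≠ s → y ≠ b → 0 < dot w₀ (y - s)) :
    StrictlyExposed S s := by
  have tilt (ε : ℝ) (y : Pt) :
      dot (w₀ + ε • (b - s)) (y - s) = dot w₀ (y - s) + ε * dot (b - s) (y - s) := by
    simp only [dot, Prod.fst_add, Prod.snd_add, Prod.smul_fst, Prod.smul_snd, smul_eq_mul]; ring
  have small : ∀ y ∈ S.erase s, ∀ᶠ ε in 𝓝[>] (0 : ℝ), 0 < dot (w₀ + ε • (b - s)) (y - s) := by
    intro y hy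
    obtain ⟨hys, hy⟩ := Finset.mem_erase.mp hy
    simp only [tilt]
    rcases eq_or_ne y b with rfl | hyb
    · filter_upwards [self_mem_nhdsWithin] with ε hε
      rw [hb, zero_add]
      exact mul_pos hε (dot_self_pos (sub_ne_zero.mpr hbs))
    · have hcont : Continuous fun ε : ℝ => dot w₀ (y - s) + ε * dot (b - s) (y - s) := by
        fun_prop
      exact ((hcont.tendsto 0).mono_left nhdsWithin_le_nhds).eventually_const_lt
        (by simpa using hw₀ y hy hys hyb)
  obtain ⟨ε, hε⟩ := ((Filter.eventually_all_finset _).2 small).exists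
  exact ⟨w₀ + ε • (b - s), fun y hy hys => hε y (Finset.mem_erase.mpr ⟨hys, hy⟩)⟩

lemma IsSupportingEdge.strictlyExposed_left {S : Finset Pt} {a b : Pt}
    (h : IsSupportingEdge S a b) (hab : a ≠ b) : StrictlyExposed S a := by
  refine strictlyExposed_of_dot_pos (w₀ := (b.2 - a.2, a.1 - b.1)) hab.symm
    (by simp only [dot, Prod.fst_sub, Prod.snd_sub]; ring) fun y hy hya hyb => ?_
  have := h y hy hya hyb
  simp only [dot, ccw, Prod.fst_sub, Prod.snd_sub] at this ⊢
  linarith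

lemma IsSupportingEdge.strictlyExposed_right {S : Finset Pt} {a b : Pt}
    (h : IsSupportingEdge S a b) (hab : a ≠ b) : StrictlyExposed S b := by
  refine strictlyExposed_of_dot_pos (w₀ := (b.2 - a.2, a.1 - b.1)) hab
    (by simp only [dot, Prod.fst_sub, Prod.snd_sub]; ring) fun y hy hyb hya => ?_
  have := h y hy hya hyb
  simp only [dot, ccw, Prod.fst_sub, Prod.snd_sub] at this ⊢
  linarith

lemma StrictlyExposed.exists_supportingEdges {S : Finset Pt} (hgp : GenPos (S : Set Pt)) {s : Pt}
    (hs : s ∈ S) (hexp : StrictlyExposed S s) (h3 : 3 ≤ S.card) :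
    ∃ r₁ ∈ S.erase s, ∃ r₂ ∈ S.erase s, r₁ ≠ r₂ ∧
      IsSupportingEdge S s r₁ ∧ IsSupportingEdge S r₂ s := by
  obtain ⟨w, hw⟩ := hexp
  have hT : 2 ≤ (S.erase s).card := by rw [Finset.card_erase_of_mem hs]; omega
  have hTne : (S.erase s).Nonempty := Finset.card_pos.mp (by omega)
  have hw' : ∀ y ∈ S.erase s, dot w s < dot w y := fun y hy => by
    have := hw y (Finset.mem_of_mem_erase hy) (Finset.ne_of_mem_erase hy)
    rw [dot_sub_right] at this
    linarith
  obtain ⟨y₀, hy₀, hmin⟩ := (S.erase s).exists_min_image (dot w) hTne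
  have hlo : ∀ x ∈ ({s} : Finset Pt), dot w x < (dot w s + dot w y₀) / 2 := by
    simp only [Finset.mem_singleton, forall_eq]
    linarith [hw' y₀ hy₀]
  have hhi : ∀ y ∈ S.erase s, (dot w s + dot w y₀) / 2 < dot w y := fun y hy => by
    linarith [hw' y₀ hy₀, hmin y hy]
  have hS : {s} ∪ S.erase s = S := by rw [← Finset.insert_eq, Finset.insert_erase hs]
  obtain ⟨s₁, hs₁, r₁, hr₁, h₁⟩ :=
    exists_ccw_nonpos_of_separated (Finset.singleton_nonempty s) hTne hlo hhi
  obtain ⟨r₂, hr₂, s₂, hs₂, h₂⟩ := exists_ccw_nonpos_of_separated hTne (Finset.singleton_nonempty s)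
    (d := -w) (fun y hy => by rw [dot_neg_left]; exact neg_lt_neg (hhi y hy))
    (fun x hx => by rw [dot_neg_left]; exact neg_lt_neg (hlo x hx))
  rw [Finset.mem_singleton] at hs₁ hs₂
  subst s₁ s₂
  rw [hS] at h₁
  rw [Finset.union_comm, hS] at h₂
  have e₁ := isSupportingEdge_of_ccw_nonpos hgp hs (Finset.mem_of_mem_erase hr₁)
    (Finset.ne_of_mem_erase hr₁).symm h₁
  have e₂ := isSupportingEdge_of_ccw_nonpos hgp (Finset.mem_of_mem_erase hr₂) hs
    (Finset.ne_of_mem_erase hr₂) h₂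
  refine ⟨r₁, hr₁, r₂, hr₂, ?_, e₁, e₂⟩
  rintro rfl
  obtain ⟨x, hx, hxr⟩ := (S.erase s).exists_mem_ne (by omega) r₁
  have right₁ := e₁ x (Finset.mem_of_mem_erase hx) (Finset.ne_of_mem_erase hx) hxr
  have right₂ := e₂ x (Finset.mem_of_mem_erase hx) hxr (Finset.ne_of_mem_erase hx)
  rw [ccw_swap] at right₂
  linarith

theorem planePathBetween_of_strictlyExposed {S : Finset Pt} (hgp : GenPos (S : Set Pt))
    {s t : Pt} (hs : s ∈ S) (ht : t ∈ S) (hst : s ≠ t) (hexp : StrictlyExposed S s) :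
    PlanePathBetween S s t := by
  induction S using Finset.strongInduction generalizing s with
  | H S ih =>
  have hpair : {s, t} ⊆ S := Finset.insert_subset hs (Finset.singleton_subset_iff.mpr ht)
  rcases (Finset.card_pair hst ▸ Finset.card_le_card hpair).eq_or_lt with h2 | h3
  · rw [← Finset.eq_of_subset_of_card_le hpair (by rw [Finset.card_pair hst, h2])]
    exact planePathBetween_pair hst
  obtain ⟨r₁, hr₁, r₂, hr₂, hne, e₁, e₂⟩ := hexp.exists_supportingEdges hgp hs h3
  obtain ⟨r, hr, hrt, hsr⟩ : ∃ r ∈ S.erase s, r ≠ t ∧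
      (IsSupportingEdge S s r ∨ IsSupportingEdge S r s) := by
    by_cases h : r₁ = t
    · exact ⟨r₂, hr₂, fun h' => hne (h.trans h'.symm), .inr e₂⟩
    · exact ⟨r₁, hr₁, h, .inl e₁⟩
  have hexp' : StrictlyExposed S r := by
    rcases hsr with h | h
    · exact h.strictlyExposed_right (Finset.ne_of_mem_erase hr).symm
    · exact h.strictlyExposed_left (Finset.ne_of_mem_erase hr)
  refine PlanePathBetween.cons hs ?_ hsr
  exact ih _ (Finset.erase_ssubset hs) (hgp.mono (by simp)) hr
    (Finset.mem_erase.mpr ⟨hst.symm, ht⟩) hrt (hexp'.mono (Finset.erase_subset s S))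

lemma disjoint_convexHull_of_separated {S₁ S₂ : Finset Pt} {d : Pt} {c : ℝ}
    (hS₁ : ∀ x ∈ S₁, dot d x < c) (hS₂ : ∀ y ∈ S₂, c < dot d y) :
    Disjoint (convexHull ℝ (S₁ : Set Pt)) (convexHull ℝ (S₂ : Set Pt)) :=
  Disjoint.mono (convexHull_min hS₁ (convex_halfSpace_lt (isLinearMap_dot d) c))
    (convexHull_min hS₂ (convex_halfSpace_gt (isLinearMap_dot d) c))
    (Set.disjoint_left.mpr fun _ (hz : _ < c) (hz' : c < _) => lt_asymm hz hz')

lemma exists_separated_split (S : Finset Pt) {d s t : Pt} (hs : s ∈ S) (ht : t ∈ S)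
    (hst : dot d s < dot d t) :
    ∃ S₁ S₂ : Finset Pt, ∃ c : ℝ, S₁ ∪ S₂ = S ∧ s ∈ S₁ ∧ t ∈ S₂ ∧
      (∀ x ∈ S₁, dot d x < c) ∧ ∀ y ∈ S₂, c < dot d y := by
  obtain ⟨c, ⟨hsc, hct⟩, hc⟩ :=
    ((Set.Ioo_infinite hst).sdiff (S.image (dot d)).finite_toSet).nonempty
  refine ⟨S.filter (dot d · < c), S.filter (c < dot d ·), c, ?_, by simp [hs, hsc],
    by simp [ht, hct], fun x hx => (Finset.mem_filter.mp hx).2,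
    fun y hy => (Finset.mem_filter.mp hy).2⟩
  ext x
  simp only [Finset.mem_union, Finset.mem_filter]
  refine ⟨fun h => h.elim And.left And.left, fun hx => ?_⟩
  rcases lt_trichotomy (dot d x) c with h | h | h
  · exact .inl ⟨hx, h⟩
  · exact absurd (Finset.mem_image_of_mem _ hx) (h ▸ hc)
  · exact .inr ⟨hx, h⟩

theorem stmt_3_general (S : Finset Pt) (hgp : GenPos (S : Set Pt))
    (s t : Pt) (hs : s ∈ S) (ht : t ∈ S) (hst : s ≠ t) :
    ∃ l : List Pt, PlaneSpanningPath (S : Set Pt) l ∧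
      l.head? = some s ∧ l.getLast? = some t := by
  by_cases hs' : StrictlyExposed S s
  · exact planePathBetween_of_strictlyExposed hgp hs ht hst hs'
  by_cases ht' : StrictlyExposed S t
  · exact (planePathBetween_of_strictlyExposed hgp ht hs hst.symm ht').symm
  have hdir : dot (t - s) s < dot (t - s) t := by
    have := dot_self_pos (sub_ne_zero.mpr hst.symm)
    rw [dot_sub_right] at this
    linarith
  obtain ⟨S₁, S₂, c, rfl, hs₁, ht₂, hS₁, hS₂⟩ := exists_separated_split S hs ht hdir
  obtain ⟨a, ha, b, hb, hab⟩ := exists_ccw_nonpos_of_separated ⟨s, hs₁⟩ ⟨t, ht₂⟩ hS₁ hS₂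
  have hne : a ≠ b := fun h => ((hS₁ a ha).trans (hS₂ b hb)).ne (congrArg _ h)
  replace hab := isSupportingEdge_of_ccw_nonpos hgp (Finset.mem_union_left _ ha)
    (Finset.mem_union_right _ hb) hne hab
  have has : a ≠ s := by rintro rfl; exact hs' (hab.strictlyExposed_left hne)
  have hbt : b ≠ t := by rintro rfl; exact ht' (hab.strictlyExposed_right hne)
  have path₁ := planePathBetween_of_strictlyExposed (hgp.mono (by simp)) ha hs₁ has
    ((hab.strictlyExposed_left hne).mono Finset.subset_union_left)
  have path₂ := planePathBetween_of_strictlyExposed (hgp.mono (by simp)) hb ht₂ hbt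
    ((hab.strictlyExposed_right hne).mono Finset.subset_union_right)
  exact path₁.symm.append (disjoint_convexHull_of_separated hS₁ hS₂) path₂ hab

theorem stmt_3 (S : Finset Pt) (h2 : 2 ≤ S.card) (hgp : GenPos (S : Set Pt))
    (s t : Pt) (hs : s ∈ S) (ht : t ∈ S) (hst : s ≠ t) :
    ∃ l : List Pt, PlaneSpanningPath (S : Set Pt) l ∧
      l.head? = some s ∧ l.getLast? = some t :=
  stmt_3_general S hgp s t hs ht hst
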